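/- For all 0 ≤ i, j ≤ n, the 𝔽₂-subspace e_j A_n e_i = { e_j a e_i : a ∈ A_n } of A_n has dimension 1 if i = j, dimension 2 if i < j, and dimension 0 if i > j. -/

import Mathlib

open scoped TensorProduct

abbrev F2 : Type := ZMod 2

inductive GenA (n : ℕ) : Type
  | e : Fin (n + 1) → GenA n
  | iota : Fin n → GenA n
  | x : Fin n → GenA n

inductive RelA (n : ℕ) : FreeAlgebra F2 (GenA n) → FreeAlgebra F2 (GenA n) → Prop
  | e_orth (i j : Fin (n + 1)) (h : i ≠ j) :
      RelA n (FreeAlgebra.ι F2 (GenA.e i) * FreeAlgebra.ι F2 (GenA.e j)) 0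
  | e_idem (i : Fin (n + 1)) :
      RelA n (FreeAlgebra.ι F2 (GenA.e i) * FreeAlgebra.ι F2 (GenA.e i))
        (FreeAlgebra.ι F2 (GenA.e i))
  | e_sum : RelA n (∑ i : Fin (n + 1), FreeAlgebra.ι F2 (GenA.e i)) 1
  | e_iota (i : Fin n) :
      RelA n (FreeAlgebra.ι F2 (GenA.e i.succ) * FreeAlgebra.ι F2 (GenA.iota i))
        (FreeAlgebra.ι F2 (GenA.iota i))
  | iota_e (i : Fin n) :
      RelA n (FreeAlgebra.ι F2 (GenA.iota i) * FreeAlgebra.ι F2 (GenA.e i.castSucc))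
        (FreeAlgebra.ι F2 (GenA.iota i))
  | e_x (i : Fin n) :
      RelA n (FreeAlgebra.ι F2 (GenA.e i.succ) * FreeAlgebra.ι F2 (GenA.x i))
        (FreeAlgebra.ι F2 (GenA.x i))
  | x_e (i : Fin n) :
      RelA n (FreeAlgebra.ι F2 (GenA.x i) * FreeAlgebra.ι F2 (GenA.e i.castSucc))
        (FreeAlgebra.ι F2 (GenA.x i))
  | iota_x (i j : Fin n) (h : (i : ℕ) + 1 = j) :
      RelA n (FreeAlgebra.ι F2 (GenA.iota j) * FreeAlgebra.ι F2 (GenA.x i))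
        (FreeAlgebra.ι F2 (GenA.x j) * FreeAlgebra.ι F2 (GenA.iota i))
  | x_x (i j : Fin n) (h : (i : ℕ) + 1 = j) :
      RelA n (FreeAlgebra.ι F2 (GenA.x j) * FreeAlgebra.ι F2 (GenA.x i)) 0

/-- The algebra `A_n`, a quotient of the path algebra of the quiver `G_n`. -/
abbrev AlgA (n : ℕ) : Type := RingQuot (RelA n)

noncomputable def Ae (n : ℕ) (i : Fin (n + 1)) : AlgA n :=
  RingQuot.mkAlgHom F2 (RelA n) (FreeAlgebra.ι F2 (GenA.e i))

noncomputable def Aiota (n : ℕ) (i : Fin n) : AlgA n :=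
  RingQuot.mkAlgHom F2 (RelA n) (FreeAlgebra.ι F2 (GenA.iota i))

noncomputable def Ax (n : ℕ) (i : Fin n) : AlgA n :=
  RingQuot.mkAlgHom F2 (RelA n) (FreeAlgebra.ι F2 (GenA.x i))

/-- The linear map `a ↦ e_j a e_i` on `A_n`; its range is the subspace `e_j A_n e_i`. -/
noncomputable def sandwich (n : ℕ) (i j : Fin (n + 1)) : AlgA n →ₗ[F2] AlgA n :=
  (LinearMap.mulLeft F2 (Ae n j)).comp (LinearMap.mulRight F2 (Ae n i))


-- ### representation
abbrev Mat (n : ℕ) : Type := Matrix (Fin (n + 1)) (Fin (n + 1)) (DualNumber F2)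

section rep
open Matrix DualNumber

noncomputable def genMat {n : ℕ} : GenA n → Mat n
  | .e i => single i i 1
  | .iota i => single i.succ i.castSucc 1
  | .x i => single i.succ i.castSucc eps

lemma sum_diag (n : ℕ) : (∑ i : Fin (n+1), single i i (1 : DualNumber F2)) = 1 := by
  refine Matrix.ext fun a b => ?_
  rw [Matrix.sum_apply]
  simp only [single, Matrix.of_apply, Matrix.one_apply, and_self_left]
  rcases eq_or_ne a b with rfl | h
  · simp
  · simp [h, fun i => show ¬(i = a ∧ i = b) from fun ⟨h1, h2⟩ => h (h1 ▸ h2 ▸ rfl)]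

lemma castSucc_eq_succ {n : ℕ} {i j : Fin n} (h : (i : ℕ) + 1 = j) : j.castSucc = i.succ := by
  ext; simp [h.symm]

noncomputable def phi {n : ℕ} : AlgA n →ₐ[F2] Mat n :=
  RingQuot.liftAlgHom F2 ⟨FreeAlgebra.lift F2 genMat, by
    intro a b r
    induction r with
    | e_orth i j h =>
        simp only [_root_.map_mul, map_zero, FreeAlgebra.lift_ι_apply, genMat]
        rw [single_mul_single_of_ne (h := h)]
    | e_idem i => simp [genMat, single_mul_single_same]
    | e_sum => simp [genMat, sum_diag]
    | e_iota i => simp [genMat, single_mul_single_same]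
    | iota_e i => simp [genMat, single_mul_single_same]
    | e_x i => simp [genMat, single_mul_single_same]
    | x_e i => simp [genMat, single_mul_single_same]
    | iota_x i j h =>
        simp only [_root_.map_mul, FreeAlgebra.lift_ι_apply, genMat, castSucc_eq_succ h,
          single_mul_single_same, one_mul, mul_one]
    | x_x i j h =>
        simp only [_root_.map_mul, FreeAlgebra.lift_ι_apply, genMat, castSucc_eq_succ h,
          single_mul_single_same, eps_mul_eps, map_zero, single_zero]⟩

@[simp] lemma phi_Ae {n : ℕ} (i : Fin (n+1)) : phi (Ae n i) = single i i 1 := by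
  simp [Ae, phi, RingQuot.liftAlgHom_mkAlgHom_apply, genMat]

@[simp] lemma phi_Aiota {n : ℕ} (i : Fin n) :
    phi (Aiota n i) = single i.succ i.castSucc 1 := by
  simp [Aiota, phi, RingQuot.liftAlgHom_mkAlgHom_apply, genMat]

@[simp] lemma phi_Ax {n : ℕ} (i : Fin n) :
    phi (Ax n i) = single i.succ i.castSucc eps := by
  simp [Ax, phi, RingQuot.liftAlgHom_mkAlgHom_apply, genMat]

end rep

-- ### relations in the quotient
section rels
variable {n : ℕ}

lemma arel {a b : FreeAlgebra F2 (GenA n)} (h : RelA n a b) :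
    RingQuot.mkAlgHom F2 (RelA n) a = RingQuot.mkAlgHom F2 (RelA n) b :=
  RingQuot.mkAlgHom_rel F2 h

lemma Ae_mul_Ae (i j : Fin (n+1)) :
    Ae n i * Ae n j = if i = j then Ae n i else 0 := by
  split_ifs with h
  · subst h
    have := arel (RelA.e_idem i)
    rw [map_mul] at this
    exact this
  · have := arel (RelA.e_orth i j h)
    rw [map_mul, map_zero] at this
    exact this

lemma Ae_sum : (∑ i : Fin (n+1), Ae n i) = 1 := by
  have := arel (RelA.e_sum (n := n))
  rw [map_sum, map_one] at this
  exact this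

lemma Ae_succ_mul_Aiota (m : Fin n) : Ae n m.succ * Aiota n m = Aiota n m := by
  have := arel (RelA.e_iota m); rw [map_mul] at this; exact this

lemma Aiota_mul_Ae_castSucc (m : Fin n) : Aiota n m * Ae n m.castSucc = Aiota n m := by
  have := arel (RelA.iota_e m); rw [map_mul] at this; exact this

lemma Ae_succ_mul_Ax (m : Fin n) : Ae n m.succ * Ax n m = Ax n m := by
  have := arel (RelA.e_x m); rw [map_mul] at this; exact this

lemma Ax_mul_Ae_castSucc (m : Fin n) : Ax n m * Ae n m.castSucc = Ax n m := by
  have := arel (RelA.x_e m); rw [map_mul] at this; exact this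

lemma Aiota_mul_Ax (k m : Fin n) (h : (k : ℕ) + 1 = m) :
    Aiota n m * Ax n k = Ax n m * Aiota n k := by
  have := arel (RelA.iota_x k m h); rw [map_mul, map_mul] at this; exact this

lemma Ax_mul_Ax (k m : Fin n) (h : (k : ℕ) + 1 = m) : Ax n m * Ax n k = 0 := by
  have := arel (RelA.x_x k m h); rw [map_mul, map_zero] at this; exact this

lemma Ae_mul_Aiota (j : Fin (n+1)) (m : Fin n) :
    Ae n j * Aiota n m = if j = m.succ then Aiota n m else 0 := by
  conv_lhs => rw [← Ae_succ_mul_Aiota m, ← mul_assoc, Ae_mul_Ae]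
  split_ifs with h
  · rw [h, Ae_succ_mul_Aiota]
  · rw [zero_mul]

lemma Aiota_mul_Ae (j : Fin (n+1)) (m : Fin n) :
    Aiota n m * Ae n j = if j = m.castSucc then Aiota n m else 0 := by
  conv_lhs => rw [← Aiota_mul_Ae_castSucc m, mul_assoc, Ae_mul_Ae]
  rcases eq_or_ne j m.castSucc with h | h
  · rw [if_pos h.symm, if_pos h, Aiota_mul_Ae_castSucc]
  · rw [if_neg (fun hh => h hh.symm), if_neg h, mul_zero]

lemma Ae_mul_Ax (j : Fin (n+1)) (m : Fin n) :
    Ae n j * Ax n m = if j = m.succ then Ax n m else 0 := by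
  conv_lhs => rw [← Ae_succ_mul_Ax m, ← mul_assoc, Ae_mul_Ae]
  split_ifs with h
  · rw [h, Ae_succ_mul_Ax]
  · rw [zero_mul]

lemma Ax_mul_Ae (j : Fin (n+1)) (m : Fin n) :
    Ax n m * Ae n j = if j = m.castSucc then Ax n m else 0 := by
  conv_lhs => rw [← Ax_mul_Ae_castSucc m, mul_assoc, Ae_mul_Ae]
  rcases eq_or_ne j m.castSucc with h | h
  · rw [if_pos h.symm, if_pos h, Ax_mul_Ae_castSucc]
  · rw [if_neg (fun hh => h hh.symm), if_neg h, mul_zero]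

end rels

-- ### path monomials
noncomputable def ip (n : ℕ) (i : ℕ) : ℕ → AlgA n
  | 0 => if h : i < n + 1 then Ae n ⟨i, h⟩ else 0
  | (d+1) => (if h : i + d < n then Aiota n ⟨i + d, h⟩ else 0) * ip n i d

noncomputable def xp (n : ℕ) (i d : ℕ) : AlgA n :=
  (if h : i + d < n then Ax n ⟨i + d, h⟩ else 0) * ip n i d

section paths
variable {n : ℕ}

lemma ip_zero (i : ℕ) (h : i < n + 1) : ip n i 0 = Ae n ⟨i, h⟩ := by
  rw [ip, dif_pos h]

lemma ip_succ (i d : ℕ) (h : i + d < n) :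
    ip n i (d+1) = Aiota n ⟨i + d, h⟩ * ip n i d := by
  rw [ip, dif_pos h]

lemma xp_def (i d : ℕ) (h : i + d < n) :
    xp n i d = Ax n ⟨i + d, h⟩ * ip n i d := by
  rw [xp, dif_pos h]

lemma Ae_mul_ip (k : Fin (n+1)) {i d : ℕ} (h : i + d ≤ n) :
    Ae n k * ip n i d = if (k : ℕ) = i + d then ip n i d else 0 := by
  induction d with
  | zero =>
      simp only [Nat.add_zero]
      rw [ip_zero i (by omega), Ae_mul_Ae]
      rcases eq_or_ne (k : ℕ) i with hk | hk
      · have hk' : k = ⟨i, by omega⟩ := Fin.ext hk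
        rw [if_pos hk', if_pos hk, hk']
      · rw [if_neg (fun hh => hk (by simpa [Fin.ext_iff] using hh)), if_neg hk]
  | succ d ih =>
      have hd : i + d < n := by omega
      rw [ip_succ i d hd, ← mul_assoc, Ae_mul_Aiota]
      rcases eq_or_ne (k : ℕ) (i + (d+1)) with hk | hk
      · rw [if_pos (by ext; simp [hk]; omega), if_pos hk]
      · rw [if_neg (by simp [Fin.ext_iff]; omega), if_neg hk, zero_mul]

lemma ip_mul_Ae (k : Fin (n+1)) {i d : ℕ} (h : i + d ≤ n) :
    ip n i d * Ae n k = if (k : ℕ) = i then ip n i d else 0 := by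
  induction d with
  | zero =>
      rw [ip_zero i (by omega), Ae_mul_Ae]
      rcases eq_or_ne (k : ℕ) i with hk | hk
      · have hk' : (⟨i, by omega⟩ : Fin (n+1)) = k := Fin.ext hk.symm
        rw [if_pos hk', if_pos hk, hk']
      · rw [if_neg (fun hh => hk (by simpa [Fin.ext_iff] using hh.symm)), if_neg hk]
  | succ d ih =>
      have hd : i + d < n := by omega
      rw [ip_succ i d hd, mul_assoc, ih (by omega)]
      split_ifs with hk
      · rfl
      · rw [mul_zero]

lemma Ae_mul_xp (k : Fin (n+1)) {i d : ℕ} (h : i + d < n) :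
    Ae n k * xp n i d = if (k : ℕ) = i + d + 1 then xp n i d else 0 := by
  rw [xp_def i d h, ← mul_assoc, Ae_mul_Ax]
  rcases eq_or_ne (k : ℕ) (i + d + 1) with hk | hk
  · rw [if_pos (by ext; simp [hk]), if_pos hk, ← xp_def]
  · rw [if_neg (by simp [Fin.ext_iff]; omega), if_neg hk, zero_mul]

lemma xp_mul_Ae (k : Fin (n+1)) {i d : ℕ} (h : i + d < n) :
    xp n i d * Ae n k = if (k : ℕ) = i then xp n i d else 0 := by
  rw [xp_def i d h, mul_assoc, ip_mul_Ae k (by omega)]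
  split_ifs with hk
  · rw [← xp_def]
  · rw [mul_zero]

lemma Aiota_mul_ip (m : Fin n) {i d : ℕ} (h : i + d ≤ n) :
    Aiota n m * ip n i d = if (m : ℕ) = i + d then ip n i (d+1) else 0 := by
  conv_lhs => rw [← Aiota_mul_Ae_castSucc m, mul_assoc, Ae_mul_ip _ h]
  rcases eq_or_ne (m : ℕ) (i + d) with hk | hk
  · have hlt : i + d < n := by omega
    have hm : m = ⟨i + d, hlt⟩ := Fin.ext (by simpa using hk)
    rw [if_pos (by simpa using hk), if_pos hk, ip_succ i d hlt, hm]
  · rw [if_neg (by simpa using hk), if_neg hk, mul_zero]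

lemma Ax_mul_ip (m : Fin n) {i d : ℕ} (h : i + d ≤ n) :
    Ax n m * ip n i d = if (m : ℕ) = i + d then xp n i d else 0 := by
  conv_lhs => rw [← Ax_mul_Ae_castSucc m, mul_assoc, Ae_mul_ip _ h]
  rcases eq_or_ne (m : ℕ) (i + d) with hk | hk
  · have hlt : i + d < n := by omega
    have hm : m = ⟨i + d, hlt⟩ := Fin.ext (by simpa using hk)
    rw [if_pos (by simpa using hk), if_pos hk, xp_def i d hlt, hm]
  · rw [if_neg (by simpa using hk), if_neg hk, mul_zero]

lemma Aiota_mul_xp (m : Fin n) {i d : ℕ} (h : i + d < n) :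
    Aiota n m * xp n i d = if (m : ℕ) = i + d + 1 then xp n i (d+1) else 0 := by
  rcases eq_or_ne (m : ℕ) (i + d + 1) with hk | hk
  · rw [if_pos hk, xp_def i d h]
    have hiota : Aiota n m * Ax n ⟨i + d, h⟩ = Ax n m * Aiota n ⟨i + d, h⟩ :=
      Aiota_mul_Ax ⟨i + d, h⟩ m (by simpa using hk.symm)
    rw [← mul_assoc, hiota, mul_assoc, Aiota_mul_ip _ (le_of_lt h), if_pos rfl,
      Ax_mul_ip _ (by omega), if_pos (by omega)]
  · rw [if_neg hk]
    conv_lhs => rw [← Aiota_mul_Ae_castSucc m, mul_assoc, Ae_mul_xp _ h,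
      if_neg (by simpa using hk), mul_zero]

lemma Ax_mul_xp (m : Fin n) {i d : ℕ} (h : i + d < n) :
    Ax n m * xp n i d = 0 := by
  rcases eq_or_ne (m : ℕ) (i + d + 1) with hk | hk
  · rw [xp_def i d h, ← mul_assoc,
      Ax_mul_Ax ⟨i + d, h⟩ m (by simpa using hk.symm), zero_mul]
  · conv_lhs => rw [← Ax_mul_Ae_castSucc m, mul_assoc, Ae_mul_xp _ h,
      if_neg (by simpa using hk), mul_zero]

end paths

section prods
variable {n : ℕ}

lemma ip_mul_ip {i d k d' : ℕ} (hk : k = i + d) (h : i + d + d' ≤ n) :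
    ip n k d' * ip n i d = ip n i (d + d') := by
  subst hk
  induction d' with
  | zero =>
      rw [ip_zero (i+d) (by omega), Ae_mul_ip _ (by omega), if_pos rfl]
      rfl
  | succ d' ih =>
      rw [ip_succ (i+d) d' (by omega), mul_assoc, ih (by omega),
        Aiota_mul_ip _ (by omega), if_pos (by simp only [Fin.val_mk]; omega)]
      congr 1

lemma xp_mul_ip {i d k d' : ℕ} (hk : k = i + d) (h : i + d + d' < n) :
    xp n k d' * ip n i d = xp n i (d + d') := by
  subst hk
  rw [xp_def (i+d) d' (by omega), mul_assoc, ip_mul_ip rfl (by omega),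
    Ax_mul_ip _ (by omega), if_pos (by simp only [Fin.val_mk]; omega)]

lemma ip_mul_xp {i d k d' : ℕ} (hk : k = i + d + 1) (h : i + d + 1 + d' ≤ n) :
    ip n k d' * xp n i d = xp n i (d + d') := by
  subst hk
  induction d' with
  | zero =>
      rw [ip_zero (i+d+1) (by omega), Ae_mul_xp _ (by omega), if_pos rfl]
      rfl
  | succ d' ih =>
      rw [ip_succ (i+d+1) d' (by omega), mul_assoc, ih (by omega),
        Aiota_mul_xp _ (by omega), if_pos (by simp only [Fin.val_mk]; omega)]
      congr 1

lemma xp_mul_xp {i d k d' : ℕ} (hk : k = i + d + 1) (h : i + d + 1 + d' < n) :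
    xp n k d' * xp n i d = 0 := by
  subst hk
  rw [xp_def (i+d+1) d' (by omega), mul_assoc, ip_mul_xp rfl (by omega),
    Ax_mul_xp _ (by omega)]

end prods

-- ### the spanning submodules
noncomputable def Pm (n : ℕ) (j i : Fin (n+1)) : AlgA n :=
  if (i : ℕ) ≤ j then ip n i (j - i) else 0

noncomputable def Xm (n : ℕ) (j i : Fin (n+1)) : AlgA n :=
  if (i : ℕ) < j then xp n i ((j : ℕ) - i - 1) else 0

noncomputable def SS (n : ℕ) (j i : Fin (n+1)) : Submodule F2 (AlgA n) :=
  Submodule.span F2 {Pm n j i, Xm n j i}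

section span
variable {n : ℕ}

lemma Pm_mem (j i : Fin (n+1)) : Pm n j i ∈ SS n j i :=
  Submodule.subset_span (Set.mem_insert _ _)

lemma Xm_mem (j i : Fin (n+1)) : Xm n j i ∈ SS n j i :=
  Submodule.subset_span (Set.mem_insert_of_mem _ rfl)

lemma SS_mul {j k i : Fin (n+1)} {a b : AlgA n}
    (ha : a ∈ SS n j k) (hb : b ∈ SS n k i) : a * b ∈ SS n j i := by
  have key : ∀ u ∈ ({Pm n j k, Xm n j k} : Set (AlgA n)),
      ∀ v ∈ ({Pm n k i, Xm n k i} : Set (AlgA n)), u * v ∈ SS n j i := by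
    rintro u (rfl | rfl) v (rfl | rfl)
    · -- Pm * Pm
      unfold Pm
      split_ifs with h1 h2 h2
      · rw [ip_mul_ip (i := (i:ℕ)) (d := (k:ℕ) - i) (by omega) (by omega)]
        have : ((k:ℕ) - i) + ((j:ℕ) - k) = (j:ℕ) - i := by omega
        rw [this]
        have : ip n i ((j:ℕ) - i) = Pm n j i := by rw [Pm, if_pos (by omega)]
        rw [this]; exact Pm_mem j i
      all_goals simp [Submodule.zero_mem]
    · -- Pm * Xm
      unfold Pm Xm
      split_ifs with h1 h2 h2
      · rw [ip_mul_xp (i := (i:ℕ)) (d := (k:ℕ) - i - 1) (by omega) (by omega)]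
        have : ((k:ℕ) - i - 1) + ((j:ℕ) - k) = (j:ℕ) - i - 1 := by omega
        rw [this]
        have : xp n i ((j:ℕ) - i - 1) = Xm n j i := by rw [Xm, if_pos (by omega)]
        rw [this]; exact Xm_mem j i
      all_goals simp [Submodule.zero_mem]
    · -- Xm * Pm
      unfold Pm Xm
      split_ifs with h1 h2 h2
      · rw [xp_mul_ip (i := (i:ℕ)) (d := (k:ℕ) - i) (by omega) (by omega)]
        have : ((k:ℕ) - i) + ((j:ℕ) - k - 1) = (j:ℕ) - i - 1 := by omega
        rw [this]
        have : xp n i ((j:ℕ) - i - 1) = Xm n j i := by rw [Xm, if_pos (by omega)]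
        rw [this]; exact Xm_mem j i
      all_goals simp [Submodule.zero_mem]
    · -- Xm * Xm
      unfold Xm
      split_ifs with h1 h2 h2
      · rw [xp_mul_xp (i := (i:ℕ)) (d := (k:ℕ) - i - 1) (by omega) (by omega)]
        exact Submodule.zero_mem _
      all_goals simp [Submodule.zero_mem]
  have hmul : a * b ∈ SS n j k * SS n k i := Submodule.mul_mem_mul ha hb
  rw [SS, SS, Submodule.span_mul_span] at hmul
  refine Submodule.span_le.mpr ?_ hmul
  rintro w ⟨u, hu, v, hv, rfl⟩
  exact key u hu v hv

lemma Ae_eq_Pm (i : Fin (n+1)) : Ae n i = Pm n i i := by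
  rw [Pm, if_pos le_rfl]
  have : (i : ℕ) - i = 0 := by omega
  rw [this, ip_zero _ (by omega)]

lemma Aiota_eq_Pm (m : Fin n) : Aiota n m = Pm n m.succ m.castSucc := by
  rw [Pm, if_pos (by simp)]
  have h1 : (m.succ : ℕ) - (m.castSucc : ℕ) = 1 := by simp
  rw [h1, ip_succ _ 0 (by simpa using m.isLt), ip_zero _ (by omega)]
  have h2 : (⟨(m.castSucc : ℕ) + 0, by simpa using m.isLt⟩ : Fin n) = m := by
    ext; simp
  have h3 : (⟨(m.castSucc : ℕ), by omega⟩ : Fin (n+1)) = m.castSucc := by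
    ext; simp
  rw [h2, h3, Aiota_mul_Ae_castSucc]

lemma Ax_eq_Xm (m : Fin n) : Ax n m = Xm n m.succ m.castSucc := by
  rw [Xm, if_pos (by simp)]
  have h1 : (m.succ : ℕ) - (m.castSucc : ℕ) - 1 = 0 := by simp
  rw [h1, xp_def _ 0 (by simpa using m.isLt), ip_zero _ (by omega)]
  have h2 : (⟨(m.castSucc : ℕ) + 0, by simpa using m.isLt⟩ : Fin n) = m := by
    ext; simp
  have h3 : (⟨(m.castSucc : ℕ), by omega⟩ : Fin (n+1)) = m.castSucc := by
    ext; simp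
  rw [h2, h3, Ax_mul_Ae_castSucc]

lemma mem_SS (a : AlgA n) (i j : Fin (n+1)) : Ae n j * a * Ae n i ∈ SS n j i := by
  obtain ⟨b, rfl⟩ := RingQuot.mkAlgHom_surjective F2 (RelA n) a
  induction b using FreeAlgebra.induction generalizing i j with
  | grade0 r =>
      rw [AlgHom.commutes]
      have : Ae n j * algebraMap F2 (AlgA n) r * Ae n i = r • (Ae n j * Ae n i) := by
        rw [mul_assoc, Algebra.smul_def, ← mul_assoc, ← mul_assoc,
          Algebra.commutes r (Ae n j)]
      rw [this, Ae_mul_Ae]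
      split_ifs with h
      · subst h
        rw [Ae_eq_Pm]
        exact (SS n j j).smul_mem _ (Pm_mem j j)
      · rw [smul_zero]; exact (SS n j i).zero_mem
  | grade1 g =>
      cases g with
      | e m =>
          show Ae n j * Ae n m * Ae n i ∈ SS n j i
          rw [Ae_mul_Ae]
          split_ifs with h
          · subst h
            rw [Ae_mul_Ae]
            split_ifs with h2
            · subst h2; rw [Ae_eq_Pm]; exact Pm_mem _ _
            · exact (SS n j i).zero_mem
          · rw [zero_mul]; exact (SS n j i).zero_mem
      | iota m =>
          show Ae n j * Aiota n m * Ae n i ∈ SS n j i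
          rw [Ae_mul_Aiota]
          split_ifs with h
          · rw [Aiota_mul_Ae]
            split_ifs with h2
            · subst h; subst h2; rw [Aiota_eq_Pm]; exact Pm_mem _ _
            · exact (SS n j i).zero_mem
          · rw [zero_mul]; exact (SS n j i).zero_mem
      | x m =>
          show Ae n j * Ax n m * Ae n i ∈ SS n j i
          rw [Ae_mul_Ax]
          split_ifs with h
          · rw [Ax_mul_Ae]
            split_ifs with h2
            · subst h; subst h2; rw [Ax_eq_Xm]; exact Xm_mem _ _
            · exact (SS n j i).zero_mem
          · rw [zero_mul]; exact (SS n j i).zero_mem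
  | mul a b ha hb =>
      rw [map_mul]
      have key : Ae n j * (RingQuot.mkAlgHom F2 (RelA n) a * RingQuot.mkAlgHom F2 (RelA n) b)
            * Ae n i
          = ∑ k : Fin (n+1), (Ae n j * RingQuot.mkAlgHom F2 (RelA n) a * Ae n k) *
              (Ae n k * RingQuot.mkAlgHom F2 (RelA n) b * Ae n i) := by
        have h1 : ∀ k : Fin (n+1),
            (Ae n j * RingQuot.mkAlgHom F2 (RelA n) a * Ae n k) *
              (Ae n k * RingQuot.mkAlgHom F2 (RelA n) b * Ae n i)
            = Ae n j * RingQuot.mkAlgHom F2 (RelA n) a * (Ae n k * Ae n k) *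
              (RingQuot.mkAlgHom F2 (RelA n) b * Ae n i) := by
          intro k; noncomm_ring
        calc Ae n j * (RingQuot.mkAlgHom F2 (RelA n) a * RingQuot.mkAlgHom F2 (RelA n) b)
              * Ae n i
            = Ae n j * RingQuot.mkAlgHom F2 (RelA n) a * (∑ k : Fin (n+1), Ae n k) *
              (RingQuot.mkAlgHom F2 (RelA n) b * Ae n i) := by
              rw [Ae_sum]; noncomm_ring
          _ = ∑ k : Fin (n+1), Ae n j * RingQuot.mkAlgHom F2 (RelA n) a * Ae n k *
              (RingQuot.mkAlgHom F2 (RelA n) b * Ae n i) := by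
              rw [Finset.mul_sum, Finset.sum_mul]
          _ = _ := by
              refine Finset.sum_congr rfl fun k _ => ?_
              rw [h1 k, Ae_mul_Ae, if_pos rfl]
      rw [key]
      exact Submodule.sum_mem _ fun k _ => SS_mul (ha k j) (hb i k)
  | add a b ha hb =>
      rw [map_add, mul_add, add_mul]
      exact (SS n j i).add_mem (ha i j) (hb i j)

lemma sandwich_apply (i j : Fin (n+1)) (a : AlgA n) :
    sandwich n i j a = Ae n j * a * Ae n i := by
  simp [sandwich, mul_assoc]

lemma range_sandwich (i j : Fin (n+1)) :
    LinearMap.range (sandwich n i j) = SS n j i := by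
  apply le_antisymm
  · rintro _ ⟨a, rfl⟩
    rw [sandwich_apply]
    exact mem_SS a i j
  · rw [SS, Submodule.span_le]
    rintro w (rfl | rfl)
    · refine ⟨Pm n j i, ?_⟩
      rw [sandwich_apply, Pm]
      split_ifs with h
      · rw [mul_assoc, ip_mul_Ae _ (by omega), if_pos rfl,
          Ae_mul_ip _ (by omega), if_pos (by omega)]
      · simp
    · refine ⟨Xm n j i, ?_⟩
      rw [sandwich_apply, Xm]
      split_ifs with h
      · rw [mul_assoc, xp_mul_Ae _ (by omega), if_pos rfl,
          Ae_mul_xp _ (by omega), if_pos (by omega)]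
      · simp

end span

section rep2
open Matrix DualNumber

lemma sbm_congr {N R : Type*} [DecidableEq N] [Fintype N] [Semiring R]
    {a a' b b' : N} (ha : a = a') (hb : b = b') (c : R) :
    single a b c = single a' b' c := by subst ha; subst hb; rfl

lemma phi_ip {n : ℕ} {i d : ℕ} (h : i + d ≤ n) (a b : Fin (n+1))
    (ha : (a : ℕ) = i + d) (hb : (b : ℕ) = i) :
    phi (ip n i d) = single a b 1 := by
  induction d generalizing a with
  | zero =>
      rw [ip_zero i (by omega), phi_Ae]
      exact sbm_congr (Fin.ext (by simp; omega)) (Fin.ext (by simp; omega)) 1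
  | succ d ih =>
      have hd : i + d < n := by omega
      rw [ip_succ i d hd, _root_.map_mul, ih (by omega) ⟨i + d, by omega⟩ rfl, phi_Aiota]
      have hc : (⟨i + d, hd⟩ : Fin n).castSucc = (⟨i + d, by omega⟩ : Fin (n+1)) := by
        ext; simp
      rw [hc, single_mul_single_same, one_mul]
      exact sbm_congr (Fin.ext (by simp; omega)) rfl 1

lemma phi_xp {n : ℕ} {i d : ℕ} (h : i + d < n) (a b : Fin (n+1))
    (ha : (a : ℕ) = i + d + 1) (hb : (b : ℕ) = i) :
    phi (xp n i d) = single a b eps := by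
  rw [xp_def i d h, _root_.map_mul, phi_ip (by omega) ⟨i + d, by omega⟩ ⟨i, by omega⟩ rfl rfl,
    phi_Ax]
  have hc : (⟨i + d, h⟩ : Fin n).castSucc = (⟨i + d, by omega⟩ : Fin (n+1)) := by
    ext; simp
  rw [hc, single_mul_single_same, mul_one]
  exact sbm_congr (Fin.ext (by simp; omega)) (Fin.ext (by simp; omega)) eps

lemma Ae_ne_zero {n : ℕ} (i : Fin (n+1)) : Ae n i ≠ 0 := by
  intro h
  have h2 := congrArg phi h
  rw [phi_Ae, map_zero] at h2
  have h3 := congrFun (congrFun h2 i) i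
  rw [single_apply_same] at h3
  simp at h3

lemma finrank_SS (n : ℕ) (i j : Fin (n+1)) :
    Module.finrank F2 (SS n j i) = if i = j then 1 else if i < j then 2 else 0 := by
  rcases lt_trichotomy i j with hij | hij | hij
  · rw [if_neg hij.ne, if_pos hij]
    have hij' : (i : ℕ) < j := hij
    have hP : phi (Pm n j i) = single j i 1 := by
      rw [Pm, if_pos (le_of_lt hij')]
      exact phi_ip (by omega) j i (by omega) rfl
    have hX : phi (Xm n j i) = single j i eps := by
      rw [Xm, if_pos hij']
      exact phi_xp (by omega) j i (by omega) rfl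
    have hli : LinearIndependent F2 ![Pm n j i, Xm n j i] := by
      apply LinearIndependent.of_comp (phi.toLinearMap (R := F2))
      have hcomp : (phi.toLinearMap (R := F2)) ∘ ![Pm n j i, Xm n j i]
          = ![single j i (1 : DualNumber F2), single j i eps] := by
        funext t
        fin_cases t
        · simpa using hP
        · simpa using hX
      rw [hcomp, linearIndependent_fin2]
      constructor
      · intro h0
        simp only [Matrix.cons_val_one, Matrix.head_cons, Matrix.cons_val_zero] at h0
        have h3 := congrFun (congrFun h0 j) i
        rw [single_apply_same, Matrix.zero_apply] at h3
        have h4 := congrArg TrivSqZeroExt.snd h3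
        rw [DualNumber.snd_eps, TrivSqZeroExt.snd_zero] at h4
        exact one_ne_zero h4
      · intro a h0
        simp only [Matrix.cons_val_one, Matrix.head_cons, Matrix.cons_val_zero] at h0
        rw [smul_single] at h0
        have h3 := congrFun (congrFun h0 j) i
        rw [single_apply_same, single_apply_same] at h3
        have h4 := congrArg TrivSqZeroExt.fst h3
        rw [TrivSqZeroExt.fst_smul, DualNumber.fst_eps, TrivSqZeroExt.fst_one, smul_zero] at h4
        exact zero_ne_one h4
    have hrange : Set.range ![Pm n j i, Xm n j i] = {Pm n j i, Xm n j i} :=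
      Matrix.range_cons_cons_empty _ _ _
    have := finrank_span_eq_card hli
    rw [hrange] at this
    rw [SS, this]
    simp
  · rw [if_pos hij]
    subst hij
    have hX : Xm n i i = 0 := by rw [Xm, if_neg (lt_irrefl _)]
    rw [SS, hX]
    have hset : ({Pm n i i, 0} : Set (AlgA n)) = {0, Pm n i i} := Set.pair_comm _ _
    rw [hset, Submodule.span_insert_zero]
    have : Submodule.span F2 {Pm n i i} = F2 ∙ Pm n i i := rfl
    rw [this, finrank_span_singleton (by rw [← Ae_eq_Pm]; exact Ae_ne_zero i)]
  · rw [if_neg (by omega : ¬ i = j), if_neg (by omega : ¬ i < j)]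
    have hP : Pm n j i = 0 := by rw [Pm, if_neg (by omega)]
    have hX : Xm n j i = 0 := by rw [Xm, if_neg (by omega)]
    rw [SS, hP, hX]
    have : ({(0 : AlgA n), 0} : Set (AlgA n)) = {0} := by simp
    rw [this, Submodule.span_zero_singleton]
    exact finrank_bot F2 (AlgA n)

end rep2

theorem stmt_2 (n : ℕ) (hn : 1 ≤ n) :
    ∀ i j : Fin (n + 1),
      Module.finrank F2 (LinearMap.range (sandwich n i j)) =
        if i = j then 1 else if i < j then 2 else 0 := by
  intro i j
  rw [range_sandwich, finrank_SS]
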